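/- The function g_s(ν) = √π · 2^{1−2ν}/Γ(ν + 1/2) is strictly decreasing on the interval [1/2, 1], with g_s(1/2) = √π and g_s(1) = 1. -/

import Mathlib

open Real Set

/-!
Write `g_s(ν) = √π / F(ν)` with `F(ν) = 2^(2ν-1) Γ(ν + 1/2)`. Since `log Γ` is convex
(Bohr–Mollerup), so is `log F` on `(-1/2, ∞)`. As `log F(0) = log (√π / 2) < 0 = log F(1/2)`,
convexity forces `log F`, hence `F`, to be strictly increasing on `[1/2, ∞)`.
-/

noncomputable def twoPowMulGammaAddHalf (ν : ℝ) : ℝ := 2 ^ (2 * ν - 1) * Gamma (ν + 1 / 2)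

theorem twoPowMulGammaAddHalf_pos {ν : ℝ} (hν : -(1 / 2) < ν) : 0 < twoPowMulGammaAddHalf ν :=
  mul_pos (by positivity) (Gamma_pos_of_pos (by linarith))

theorem twoPowMulGammaAddHalf_zero : twoPowMulGammaAddHalf 0 = √π / 2 := by
  norm_num [twoPowMulGammaAddHalf, Gamma_one_half_eq, rpow_neg_one]
  ring

theorem twoPowMulGammaAddHalf_one_half : twoPowMulGammaAddHalf (1 / 2) = 1 := by
  norm_num [twoPowMulGammaAddHalf]

theorem twoPowMulGammaAddHalf_one : twoPowMulGammaAddHalf 1 = √π := by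
  rw [twoPowMulGammaAddHalf, show (1 : ℝ) + 1 / 2 = 1 / 2 + 1 by norm_num,
    Gamma_add_one one_half_pos.ne', Gamma_one_half_eq]
  norm_num
  ring

theorem convexOn_log_twoPowMulGammaAddHalf :
    ConvexOn ℝ (Ioi (-(1 / 2))) (log ∘ twoPowMulGammaAddHalf) := by
  have hGamma : ConvexOn ℝ (Ioi (-(1 / 2))) fun ν => log (Gamma (ν + 1 / 2)) := by
    have h := convexOn_log_Gamma.translate_left (1 / 2 : ℝ)
    rwa [preimage_const_add_Ioi, zero_sub] at h
  have hAffine : ConvexOn ℝ (Ioi (-(1 / 2))) fun ν : ℝ => (2 * log 2) • ν + -log 2 :=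
    ((convexOn_id (convex_Ioi _)).smul (by positivity)).add_const _
  refine (hGamma.add hAffine).congr fun ν hν => ?_
  have hG : 0 < Gamma (ν + 1 / 2) := Gamma_pos_of_pos (by linarith [mem_Ioi.mp hν])
  simp only [Pi.add_apply, Function.comp_apply, twoPowMulGammaAddHalf, smul_eq_mul]
  rw [log_mul (by positivity) hG.ne', log_rpow two_pos]
  ring

theorem sqrt_pi_div_two_lt_one : √π / 2 < 1 := by
  rw [div_lt_one two_pos, sqrt_lt' two_pos]
  linarith [pi_lt_four]

theorem strictMonoOn_twoPowMulGammaAddHalf : StrictMonoOn twoPowMulGammaAddHalf (Ici (1 / 2)) := by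
  have hlog : StrictMonoOn (log ∘ twoPowMulGammaAddHalf) (Ioi (-(1 / 2)) ∩ Ici (1 / 2)) := by
    refine convexOn_log_twoPowMulGammaAddHalf.strictMonoOn (by norm_num) one_half_pos ?_
    simp only [Function.comp_apply, twoPowMulGammaAddHalf_zero, twoPowMulGammaAddHalf_one_half,
      log_one]
    exact log_neg (by positivity) sqrt_pi_div_two_lt_one
  intro a ha b hb hab
  have hpos {x : ℝ} (hx : x ∈ Ici (1 / 2 : ℝ)) : 0 < twoPowMulGammaAddHalf x :=
    twoPowMulGammaAddHalf_pos (by linarith [mem_Ici.mp hx])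
  have hmem {x : ℝ} (hx : x ∈ Ici (1 / 2 : ℝ)) : x ∈ Ioi (-(1 / 2)) ∩ Ici (1 / 2) :=
    ⟨mem_Ioi.mpr (by linarith [mem_Ici.mp hx]), hx⟩
  exact (log_lt_log_iff (hpos ha) (hpos hb)).mp (hlog (hmem ha) (hmem hb) hab)

theorem gs_strictAnti (gs : ℝ → ℝ)
    (hgs : ∀ ν : ℝ, gs ν = Real.sqrt π * 2 ^ (1 - 2 * ν) / Real.Gamma (ν + 1 / 2)) :
    StrictAntiOn gs (Icc (1 / 2 : ℝ) 1) ∧ gs (1 / 2) = Real.sqrt π ∧ gs 1 = 1 := by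
  have hgs' : ∀ ν, gs ν = √π / twoPowMulGammaAddHalf ν := fun ν => by
    rw [hgs, twoPowMulGammaAddHalf, ← div_div, div_eq_mul_inv √π, ← rpow_neg zero_le_two,
      neg_sub]
  refine ⟨fun a ha b hb hab => ?_, ?_, ?_⟩
  · rw [hgs', hgs']
    exact div_lt_div_of_pos_left (sqrt_pos.mpr pi_pos)
      (twoPowMulGammaAddHalf_pos (by linarith [ha.1]))
      (strictMonoOn_twoPowMulGammaAddHalf ha.1 hb.1 hab)
  · rw [hgs', twoPowMulGammaAddHalf_one_half, div_one]
  · rw [hgs', twoPowMulGammaAddHalf_one, div_self (sqrt_pos.mpr pi_pos).ne']
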